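/- arXiv:2303.06761 — 4 statements merged into one kernel-verified Lean document; each statement's English description precedes it below -/
import Mathlib

section
/- Let x ∈ [0,1]ⁿ with B = {j : 0 < xⱼ < 1}. If the principal submatrix Q_BB is positive semidefinite, then for every symmetric M with M ⪰ 0 and Mᵢⱼ = 0 whenever i ∉ B or j ∉ B, we have ⟨Q, M⟩ ≥ 0. Conversely, if Q_BB is not positive semidefinite, there exists such an M (with entries bounded appropriately to keep x xᵀ + M in 𝓕_RS) with ⟨Q, M⟩ < 0. -/
/-!
Writing `M ⪰ 0` as a sum of rank-one matrices `∑ₖ vₖ vₖᵀ` gives `⟨Q, M⟩ = ∑ₖ vₖᵀ Q vₖ`, and a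
zero diagonal entry `Mᵢᵢ = ∑ₖ (vₖ)ᵢ²` forces every `vₖ` to vanish at `i`; so each `vₖ` is supported
on `B` and `Q_BB ⪰ 0` gives `⟨Q, M⟩ ≥ 0`. Conversely, if `yᵀ Q y < 0` for some `y` supported on `B`,
take `M = t y yᵀ` with `t > 0` small: for `i, j ∈ B` the McCormick inequalities
`max (xᵢ + xⱼ - 1) 0 ≤ xᵢ xⱼ ≤ min xᵢ xⱼ` are strict, so they survive the perturbation of `xᵢ xⱼ` by
`t yᵢ yⱼ`, while all other entries are not perturbed at all.
-/

open Matrix Finset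

/-- Trace inner product ⟨A, B⟩ = trace(AᵀB). -/
noncomputable def ip {n : ℕ} (A B : Matrix (Fin n) (Fin n) ℝ) : ℝ :=
  ∑ i, ∑ j, A i j * B i j

/-- The SDP-RLT feasible set. -/
def memFRS {n : ℕ} (x : Fin n → ℝ) (X : Matrix (Fin n) (Fin n) ℝ) : Prop :=
  X.IsSymm ∧ (∀ i, 0 ≤ x i ∧ x i ≤ 1) ∧
    (∀ i j, max (x i + x j - 1) 0 ≤ X i j ∧ X i j ≤ min (x i) (x j)) ∧
    (X - Matrix.vecMulVec x x).PosSemidef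

open Filter Topology

section TraceInnerProduct

variable {n : ℕ}

lemma ip_sum_right {ι : Type*} (s : Finset ι) (A : Matrix (Fin n) (Fin n) ℝ)
    (M : ι → Matrix (Fin n) (Fin n) ℝ) : ip A (∑ k ∈ s, M k) = ∑ k ∈ s, ip A (M k) := by
  simp only [ip, Matrix.sum_apply, Finset.mul_sum]
  rw [eq_comm, Finset.sum_comm]
  exact Finset.sum_congr rfl fun _ _ => Finset.sum_comm

lemma ip_smul_right (A M : Matrix (Fin n) (Fin n) ℝ) (t : ℝ) : ip A (t • M) = t * ip A M := by
  simp only [ip, Matrix.smul_apply, smul_eq_mul, Finset.mul_sum]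
  exact Finset.sum_congr rfl fun _ _ => Finset.sum_congr rfl fun _ _ => by ring

lemma ip_vecMulVec_self (A : Matrix (Fin n) (Fin n) ℝ) (y : Fin n → ℝ) :
    ip A (vecMulVec y y) = y ⬝ᵥ (A *ᵥ y) := by
  simp only [ip, vecMulVec_apply, dotProduct, mulVec, Finset.mul_sum]
  exact Finset.sum_congr rfl fun _ _ => Finset.sum_congr rfl fun _ _ => by ring

end TraceInnerProduct

theorem ip_nonneg_of_posSemidef {n : ℕ} {Q M : Matrix (Fin n) (Fin n) ℝ} (S : Set (Fin n))
    (hQ : ∀ y : Fin n → ℝ, (∀ i, i ∉ S → y i = 0) → 0 ≤ y ⬝ᵥ (Q *ᵥ y))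
    (hM : M.PosSemidef) (hMS : ∀ i, i ∉ S → M i i = 0) : 0 ≤ ip Q M := by
  obtain ⟨m, v, rfl⟩ := posSemidef_iff_eq_sum_vecMulVec.mp hM
  have hv : ∀ k i, i ∉ S → v k i = 0 := by
    intro k i hi
    have hdiag : ∑ l, v l i * v l i = 0 := by
      simpa [Matrix.sum_apply, vecMulVec_apply] using hMS i hi
    exact mul_self_eq_zero.mp <| (Finset.sum_eq_zero_iff_of_nonneg fun l _ =>
      mul_self_nonneg (v l i)).mp hdiag k (Finset.mem_univ k)
  simp only [star_trivial, ip_sum_right, ip_vecMulVec_self]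
  exact Finset.sum_nonneg fun k _ => hQ (v k) (hv k)

lemma posSemidef_smul_vecMulVec_self {n : ℕ} {t : ℝ} (ht : 0 ≤ t) (y : Fin n → ℝ) :
    (t • vecMulVec y y).PosSemidef := by
  simpa using (posSemidef_vecMulVec_self_star y).smul ht

section McCormick

variable {a b : ℝ}

lemma mcCormick_le (ha₀ : 0 ≤ a) (ha₁ : a ≤ 1) (hb₀ : 0 ≤ b) (hb₁ : b ≤ 1) :
    max (a + b - 1) 0 ≤ a * b ∧ a * b ≤ min a b :=
  ⟨max_le (by nlinarith) (mul_nonneg ha₀ hb₀), le_min (by nlinarith) (by nlinarith)⟩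

lemma mcCormick_lt (ha₀ : 0 < a) (ha₁ : a < 1) (hb₀ : 0 < b) (hb₁ : b < 1) :
    max (a + b - 1) 0 < a * b ∧ a * b < min a b :=
  ⟨max_lt (by nlinarith) (mul_pos ha₀ hb₀), lt_min (by nlinarith) (by nlinarith)⟩

end McCormick

section Perturbation

variable {n : ℕ} {x y : Fin n → ℝ}

lemma eventually_mcCormick_add_smul (hx : ∀ i, 0 ≤ x i ∧ x i ≤ 1)
    (hy : ∀ i, ¬(0 < x i ∧ x i < 1) → y i = 0) :
    ∀ᶠ t in 𝓝 (0 : ℝ), ∀ i j, max (x i + x j - 1) 0 ≤ x i * x j + t * (y i * y j) ∧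
      x i * x j + t * (y i * y j) ≤ min (x i) (x j) := by
  refine eventually_all.mpr fun i => eventually_all.mpr fun j => ?_
  by_cases hij : (0 < x i ∧ x i < 1) ∧ (0 < x j ∧ x j < 1)
  · obtain ⟨hlo, hhi⟩ := mcCormick_lt hij.1.1 hij.1.2 hij.2.1 hij.2.2
    have hcont : Continuous fun t : ℝ => x i * x j + t * (y i * y j) := by fun_prop
    have hlim := hcont.tendsto' 0 (x i * x j) (by simp)
    filter_upwards [hlim.eventually_const_lt hlo, hlim.eventually_lt_const hhi] with t h₁ h₂
    exact ⟨h₁.le, h₂.le⟩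
  · have hyy : y i * y j = 0 := by
      rcases not_and_or.mp hij with h | h <;> simp [hy _ h]
    simpa [hyy] using mcCormick_le (hx i).1 (hx i).2 (hx j).1 (hx j).2

lemma exists_memFRS_add_smul_vecMulVec (hx : ∀ i, 0 ≤ x i ∧ x i ≤ 1)
    (hy : ∀ i, ¬(0 < x i ∧ x i < 1) → y i = 0) :
    ∃ t : ℝ, 0 < t ∧ memFRS x (vecMulVec x x + t • vecMulVec y y) := by
  obtain ⟨t, hbounds, ht⟩ := (((eventually_mcCormick_add_smul hx hy).filter_mono
    nhdsWithin_le_nhds).and (self_mem_nhdsWithin (s := Set.Ioi (0 : ℝ)))).exists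
  have hpsd := posSemidef_smul_vecMulVec_self ht.le y
  refine ⟨t, ht, ?_, hx, fun i j => ?_, by simpa using hpsd⟩
  · exact isHermitian_iff_isSymm.mp <|
      ((posSemidef_vecMulVec_self_star x).add hpsd).isHermitian.trans (by simp)
  · simpa [vecMulVec_apply] using hbounds i j

end Perturbation

theorem stmt_10_general {n : ℕ} (Q : Matrix (Fin n) (Fin n) ℝ)
    (x : Fin n → ℝ) (hx : ∀ i, 0 ≤ x i ∧ x i ≤ 1)
    (B : Set (Fin n)) (hB : B = {j | 0 < x j ∧ x j < 1}) :
    -- if Q_BB is positive semidefinite, every admissible M has ⟨Q, M⟩ ≥ 0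
    ((∀ y : Fin n → ℝ, (∀ i, i ∉ B → y i = 0) → 0 ≤ y ⬝ᵥ (Q *ᵥ y)) →
      ∀ M : Matrix (Fin n) (Fin n) ℝ, M.PosSemidef →
        (∀ i j, i ∉ B ∨ j ∉ B → M i j = 0) → 0 ≤ ip Q M) ∧
    -- otherwise, some admissible M keeping xxᵀ + M feasible gives ⟨Q, M⟩ < 0
    (¬ (∀ y : Fin n → ℝ, (∀ i, i ∉ B → y i = 0) → 0 ≤ y ⬝ᵥ (Q *ᵥ y)) →
      ∃ M : Matrix (Fin n) (Fin n) ℝ, M.PosSemidef ∧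
        (∀ i j, i ∉ B ∨ j ∉ B → M i j = 0) ∧
        memFRS x (Matrix.vecMulVec x x + M) ∧ ip Q M < 0) := by
  refine ⟨fun hQB M hM hMB => ip_nonneg_of_posSemidef B hQB hM fun i hi => hMB i i (.inl hi),
    fun hQB => ?_⟩
  push Not at hQB
  obtain ⟨y, hyB, hyQy⟩ := hQB
  subst hB
  obtain ⟨t, ht, hfeas⟩ := exists_memFRS_add_smul_vecMulVec hx hyB
  refine ⟨t • vecMulVec y y, posSemidef_smul_vecMulVec_self ht.le y,
    fun i j hij => ?_, hfeas, ?_⟩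
  · rcases hij with h | h <;> simp [vecMulVec_apply, hyB _ h]
  · rw [ip_smul_right, ip_vecMulVec_self]
    exact mul_neg_of_pos_of_neg ht hyQy

theorem stmt_10 {n : ℕ} (Q : Matrix (Fin n) (Fin n) ℝ) (hQ : Q.IsSymm)
    (x : Fin n → ℝ) (hx : ∀ i, 0 ≤ x i ∧ x i ≤ 1)
    (B : Set (Fin n)) (hB : B = {j | 0 < x j ∧ x j < 1}) :
    -- if Q_BB is positive semidefinite, every admissible M has ⟨Q, M⟩ ≥ 0
    ((∀ y : Fin n → ℝ, (∀ i, i ∉ B → y i = 0) → 0 ≤ y ⬝ᵥ (Q *ᵥ y)) →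
      ∀ M : Matrix (Fin n) (Fin n) ℝ, M.PosSemidef →
        (∀ i j, i ∉ B ∨ j ∉ B → M i j = 0) → 0 ≤ ip Q M) ∧
    -- otherwise, some admissible M keeping xxᵀ + M feasible gives ⟨Q, M⟩ < 0
    (¬ (∀ y : Fin n → ℝ, (∀ i, i ∉ B → y i = 0) → 0 ≤ y ⬝ᵥ (Q *ᵥ y)) →
      ∃ M : Matrix (Fin n) (Fin n) ℝ, M.PosSemidef ∧
        (∀ i j, i ∉ B ∨ j ∉ B → M i j = 0) ∧
        memFRS x (Matrix.vecMulVec x x + M) ∧ ip Q M < 0) :=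
  stmt_10_general Q x hx B hB
end

section
/- Let n = 2k+1 ≥ 3, Q = (1/n)eeᵀ - I, c = 0. Then the minimum of q(x) = (1/2)xᵀQx over the box [0,1]ⁿ equals (1/2)(k²/n - k), attained at any 0/1-vector with exactly k ones. -/
open Matrix Finset

lemma quad_form (n : ℕ) (Q : Matrix (Fin n) (Fin n) ℝ)
    (hQ : Q = ((n : ℝ)⁻¹) • Matrix.vecMulVec 1 1 - 1) (x : Fin n → ℝ) :
    x ⬝ᵥ (Q *ᵥ x) = (n : ℝ)⁻¹ * (∑ i, x i)^2 - ∑ i, (x i)^2 := by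
  subst hQ
  simp only [dotProduct, mulVec, vecMulVec_apply, Matrix.sub_apply, Matrix.smul_apply,
    Matrix.one_apply, Pi.one_apply, smul_eq_mul]
  have h1 : ∀ i : Fin n, (∑ j, ((n:ℝ)⁻¹ * (1*1) - if i = j then 1 else 0) * x j)
      = (n:ℝ)⁻¹ * (∑ j, x j) - x i := by
    intro i
    rw [Finset.sum_congr rfl (fun j _ => sub_mul _ _ _), Finset.sum_sub_distrib]
    congr 1
    · rw [Finset.mul_sum]; exact Finset.sum_congr rfl (by intros; ring)
    · simp
  rw [Finset.sum_congr rfl (fun i _ => by rw [h1 i])]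
  rw [Finset.sum_congr rfl (fun i _ => mul_sub (x i) _ _), Finset.sum_sub_distrib]
  rw [Finset.sum_congr rfl (fun i (_ : i ∈ univ) => (mul_comm (x i) _).trans (mul_assoc _ _ _))]
  rw [← Finset.mul_sum]
  rw [show (∑ i, (∑ j, x j) * x i) = (∑ i, x i)^2 from by rw [← Finset.mul_sum]; ring]
  rw [Finset.sum_congr rfl (fun i (_ : i ∈ univ) => (sq (x i)).symm)]

lemma key_bound (k n : ℕ) (hn : n = 2 * k + 1) :
    ∀ s : Finset (Fin n), ∀ x : Fin n → ℝ, (∀ i, 0 ≤ x i ∧ x i ≤ 1) →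
      (∀ i, i ∉ s → x i = 0 ∨ x i = 1) →
      (n : ℝ) * ∑ i, (x i)^2 - (∑ i, x i)^2 ≤ (k : ℝ) * (k + 1) := by
  classical
  intro s
  induction s using Finset.induction_on with
  | empty =>
    intro x hx h01
    have hsq : ∀ i : Fin n, (x i)^2 = x i := by
      intro i; rcases h01 i (by simp) with h | h <;> simp [h]
    rw [Finset.sum_congr rfl (fun i _ => hsq i)]
    have hb : ∀ i : Fin n, x i = if x i = 1 then (1:ℝ) else 0 := by
      intro i; rcases h01 i (by simp) with h | h <;> simp [h]
    rw [Finset.sum_congr rfl (fun i _ => hb i), Finset.sum_boole]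
    set N := (univ.filter (fun i => x i = 1)).card with hN
    have hnn : (n : ℝ) = 2 * k + 1 := by rw [hn]; push_cast; ring
    rcases le_or_gt N k with h | h
    · have : (N : ℝ) ≤ k := by exact_mod_cast h
      nlinarith [sq_nonneg ((N:ℝ) - k)]
    · have : (k : ℝ) + 1 ≤ N := by exact_mod_cast h
      nlinarith [sq_nonneg ((N:ℝ) - k - 1)]
  | @insert i s' hi ih =>
    intro x hx h01
    set t := x i with ht
    have ht0 : 0 ≤ t := (hx i).1
    have ht1 : t ≤ 1 := (hx i).2
    have hsum : ∀ c : ℝ, ∑ j, Function.update x i c j = c + ∑ j ∈ univ \ {i}, x j := by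
      intro c; exact Finset.sum_update_of_mem (mem_univ i) x c
    have hsumsq : ∀ c : ℝ, ∑ j, (Function.update x i c j)^2
        = c^2 + ∑ j ∈ univ \ {i}, (x j)^2 := by
      intro c
      have h1 : ∑ j, Function.update (fun j => (x j)^2) i (c^2) j
          = c^2 + ∑ j ∈ univ \ {i}, (x j)^2 :=
        Finset.sum_update_of_mem (mem_univ i) (fun j => (x j)^2) (c^2)
      rw [← h1]
      exact Finset.sum_congr rfl (fun j _ => Function.apply_update (fun _ v => v^2) x i c j)
    set S1 := ∑ j ∈ univ \ {i}, x j with hS1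
    set S2 := ∑ j ∈ univ \ {i}, (x j)^2 with hS2
    have hx0 : (n : ℝ) * ∑ j, (Function.update x i 0 j)^2 - (∑ j, Function.update x i 0 j)^2
        ≤ (k : ℝ) * (k + 1) := by
      apply ih
      · intro j; rcases eq_or_ne j i with rfl | h
        · simp
        · simp [Function.update_of_ne h]; exact ⟨(hx j).1, (hx j).2⟩
      · intro j hj; rcases eq_or_ne j i with rfl | h
        · simp
        · rw [Function.update_of_ne h]
          exact h01 j (by simp [h, hj])
    have hx1 : (n : ℝ) * ∑ j, (Function.update x i 1 j)^2 - (∑ j, Function.update x i 1 j)^2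
        ≤ (k : ℝ) * (k + 1) := by
      apply ih
      · intro j; rcases eq_or_ne j i with rfl | h
        · simp
        · simp [Function.update_of_ne h]; exact ⟨(hx j).1, (hx j).2⟩
      · intro j hj; rcases eq_or_ne j i with rfl | h
        · simp
        · rw [Function.update_of_ne h]
          exact h01 j (by simp [h, hj])
    simp only [hsum, hsumsq] at hx0 hx1
    have hxex : ∑ j, x j = t + S1 := by
      have h := hsum t
      rwa [ht, Function.update_eq_self] at h
    have hxexsq : ∑ j, (x j)^2 = t^2 + S2 := by
      have h := hsumsq t
      rwa [ht, Function.update_eq_self] at h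
    rw [hxex, hxexsq]
    have hn1 : (1:ℝ) ≤ (n:ℝ) := by
      have : 1 ≤ n := by omega
      exact_mod_cast this
    nlinarith [mul_nonneg (mul_nonneg ht0 (sub_nonneg.2 ht1)) (sub_nonneg.2 hn1)]

theorem stmt_14 (k : ℕ) (hk : 1 ≤ k) (n : ℕ) (hn : n = 2 * k + 1)
    (Q : Matrix (Fin n) (Fin n) ℝ)
    (hQ : Q = ((n : ℝ)⁻¹) • Matrix.vecMulVec 1 1 - 1) :
    (∀ x ∈ Set.Icc (0 : Fin n → ℝ) 1,
      (1/2) * ((k : ℝ)^2 / n - k) ≤ (1/2) * (x ⬝ᵥ (Q *ᵥ x))) ∧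
    (∀ v : Fin n → ℝ, (∀ i, v i = 0 ∨ v i = 1) → (∑ i, v i) = (k : ℝ) →
      (1/2) * (v ⬝ᵥ (Q *ᵥ v)) = (1/2) * ((k : ℝ)^2 / n - k)) := by
  have hnpos : (0:ℝ) < n := by
    have : 0 < n := by omega
    exact_mod_cast this
  constructor
  · intro x hx
    rw [quad_form n Q hQ x]
    have hb : ∀ i, 0 ≤ x i ∧ x i ≤ 1 := fun i => ⟨hx.1 i, hx.2 i⟩
    have hkb := key_bound k n hn univ x hb (fun i hi => absurd (mem_univ i) hi)
    set s := ∑ i, x i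
    set T := ∑ i, (x i)^2
    have h3 : (k:ℝ)^2 - k*n ≤ s^2 - n*T := by
      have hncast : (n:ℝ) = 2*k+1 := by rw [hn]; push_cast; ring
      nlinarith [hkb]
    have e1 : (k:ℝ)^2/n - k = ((k:ℝ)^2 - k*n)/n := by field_simp
    have e2 : (n:ℝ)⁻¹*s^2 - T = (s^2 - n*T)/n := by field_simp
    rw [e1, e2]
    exact mul_le_mul_of_nonneg_left ((div_le_div_iff_of_pos_right hnpos).2 h3) (by norm_num)
  · intro v h01 hsum
    rw [quad_form n Q hQ v]
    have hsq : ∀ i, (v i)^2 = v i := by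
      intro i; rcases h01 i with h | h <;> simp [h]
    rw [Finset.sum_congr rfl (fun i _ => hsq i), hsum, div_eq_mul_inv]
    ring
end

section
/- Let n = 2k+1 ≥ 3, Q = (1/n)eeᵀ - I, c = 0, x̂ = (1/2)e, and X̂ = (1/4)(1 + 1/(n-1)) I + (1/4)(1 - 1/(n-1)) eeᵀ. Then (x̂, X̂) belongs to the SDP-RLT feasible set 𝓕_RS, and (1/2)⟨Q, X̂⟩ + cᵀx̂ = -n/8 < (1/2)(k²/n - k) = ℓ*. Hence the SDP-RLT relaxation of this instance is inexact. -/
open Matrix Finset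

/-!
Both `x̂ x̂ᵀ = J / 4` and `X̂` lie in the span of `I` and `J = e eᵀ`, where everything is
explicit: `a I + b J` acts as `a` on `e^⊥` and as `a + n b` on `e`, and
`⟨a I + b J, c I + d J⟩ = n ((a + b)(c + d) + (n - 1) b d)`.
Writing `X̂ - x̂ x̂ᵀ = a I + b J` we get `a + n b = 0`, so it is positive semidefinite (singular
along `e`), and the objective evaluates to `-n / 8`, whereas
`ℓ* + n / 8 = (n - 2k)² / (8n) = 1 / (8n) > 0`.
-/

section Equicorrelated

variable {ι : Type*} [DecidableEq ι]

lemma smul_one_add_smul_ones_apply (a b : ℝ) (i j : ι) :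
    (a • (1 : Matrix ι ι ℝ) + b • vecMulVec 1 1 : Matrix ι ι ℝ) i j =
      if i = j then a + b else b := by
  by_cases h : i = j <;> simp [h, one_apply]

variable [Fintype ι]

lemma dotProduct_smul_one_add_smul_ones_mulVec (a b : ℝ) (x : ι → ℝ) :
    x ⬝ᵥ ((a • (1 : Matrix ι ι ℝ) + b • vecMulVec 1 1) *ᵥ x) =
      a * ∑ i, x i ^ 2 + b * (∑ i, x i) ^ 2 := by
  simp only [add_mulVec, smul_mulVec, one_mulVec, vecMulVec_mulVec, dotProduct_add,
    dotProduct_smul]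
  simp [dotProduct, sq, Finset.mul_sum, mul_comm]

lemma posSemidef_smul_one_add_smul_ones {a b : ℝ} (ha : 0 ≤ a)
    (hab : 0 ≤ a + Fintype.card ι * b) :
    (a • (1 : Matrix ι ι ℝ) + b • vecMulVec 1 1).PosSemidef := by
  refine posSemidef_iff_dotProduct_mulVec.2 ⟨?_, fun x => ?_⟩
  · refine IsHermitian.ext fun i j => ?_
    rw [star_trivial, smul_one_add_smul_ones_apply, smul_one_add_smul_ones_apply]
    simp only [eq_comm]
  · rw [star_trivial, dotProduct_smul_one_add_smul_ones_mulVec]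
    have hCS : (∑ i, x i) ^ 2 ≤ Fintype.card ι * ∑ i, x i ^ 2 := sq_sum_le_card_mul_sum_sq
    have hsq : 0 ≤ ∑ i, x i ^ 2 := by positivity
    rcases le_total 0 b with hb | hb
    · nlinarith [sq_nonneg (∑ i, x i)]
    · nlinarith [mul_le_mul_of_nonpos_left hCS hb]

end Equicorrelated

lemma ip_smul_one_add_smul_ones {n : ℕ} (a b c d : ℝ) :
    ip (a • 1 + b • vecMulVec 1 1)
        (c • 1 + d • vecMulVec 1 1 : Matrix (Fin n) (Fin n) ℝ) =
      n * ((a + b) * (c + d) + (n - 1) * (b * d)) := by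
  have hrow : ∀ i : Fin n, ∑ j, (if i = j then a + b else b) * (if i = j then c + d else d) =
      (a + b) * (c + d) + (n - 1) * (b * d) := by
    intro i
    have hn : 1 ≤ n := Nat.one_le_of_lt i.isLt
    simp [Finset.sum_ite, Finset.filter_eq, Finset.filter_ne, Nat.cast_sub hn]
  simp only [ip, smul_one_add_smul_ones_apply, hrow, sum_const, card_univ, Fintype.card_fin,
    nsmul_eq_mul]

lemma memFRS_half_smul_one_add_smul_ones {n : ℕ} {a b : ℝ} (ha : 0 ≤ a) (hb : 0 ≤ b)
    (hab : a + b ≤ 1 / 2) (hpsd : 0 ≤ a + n * (b - 1 / 4)) :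
    memFRS (fun _ => 1 / 2) (a • 1 + b • vecMulVec 1 1 : Matrix (Fin n) (Fin n) ℝ) := by
  have hcentered : (a • 1 + b • vecMulVec 1 1 : Matrix (Fin n) (Fin n) ℝ) -
      vecMulVec (fun _ => 1 / 2) (fun _ => 1 / 2) = a • 1 + (b - 1 / 4) • vecMulVec 1 1 := by
    ext i j
    simp only [Matrix.sub_apply, smul_one_add_smul_ones_apply, vecMulVec_apply]
    split_ifs <;> ring
  refine ⟨IsSymm.ext fun i j => ?_, fun _ => by norm_num, fun i j => ?_, ?_⟩
  · simp only [smul_one_add_smul_ones_apply, eq_comm]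
  · rw [smul_one_add_smul_ones_apply]
    split_ifs <;> norm_num <;> constructor <;> linarith
  · rw [hcentered]
    exact posSemidef_smul_one_add_smul_ones ha (by simpa using hpsd)

lemma neg_div_eight_lt_box_min (k : ℕ) :
    -((2 * k + 1 : ℕ) : ℝ) / 8 < 1 / 2 * ((k : ℝ) ^ 2 / (2 * k + 1 : ℕ) - k) := by
  push_cast
  rw [div_sub' (by positivity), ← sub_pos]
  field_simp
  ring_nf
  positivity

theorem stmt_15 (k : ℕ) (hk : 1 ≤ k) (n : ℕ) (hn : n = 2 * k + 1)
    (Q : Matrix (Fin n) (Fin n) ℝ)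
    (hQ : Q = ((n : ℝ)⁻¹) • Matrix.vecMulVec 1 1 - 1)
    (xh : Fin n → ℝ) (hxh : xh = fun _ => (1 : ℝ)/2)
    (Xh : Matrix (Fin n) (Fin n) ℝ)
    (hXh : Xh = ((1/4) * (1 + 1/((n : ℝ) - 1))) • (1 : Matrix (Fin n) (Fin n) ℝ) +
      ((1/4) * (1 - 1/((n : ℝ) - 1))) • Matrix.vecMulVec 1 1) :
    memFRS xh Xh ∧
    (1/2) * ip Q Xh = -(n : ℝ)/8 ∧
    -(n : ℝ)/8 < (1/2) * ((k : ℝ)^2 / n - k) := by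
  subst hQ hxh hXh
  have hn2 : (2 : ℝ) ≤ n := by exact_mod_cast (show 2 ≤ n by omega)
  have hn1 : (1 : ℝ) ≤ n - 1 := by linarith
  have hinv : 1 / ((n : ℝ) - 1) ≤ 1 := by rw [div_le_one (by linarith)]; exact hn1
  have hQ : (n : ℝ)⁻¹ • vecMulVec 1 1 - 1 = (-1 : ℝ) • (1 : Matrix (Fin n) (Fin n) ℝ) +
      (n : ℝ)⁻¹ • vecMulVec 1 1 := by
    module
  refine ⟨memFRS_half_smul_one_add_smul_ones ?_ ?_ ?_ ?_, ?_, hn ▸ neg_div_eight_lt_box_min k⟩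
  · positivity
  · linarith
  · linarith
  · field_simp
    linarith
  · have hn0 : (n : ℝ) ≠ 0 := by linarith
    rw [hQ, ip_smul_one_add_smul_ones]
    field_simp
    ring
end

section
/- For Q = (1/3)eeᵀ - I ∈ S³ and c = 0: the minimum of q(x) = (1/2)xᵀQx over [0,1]³ equals -1/3, while ℓ_R((1/2,1/2,1/2)) = -1/2. Hence the RLT relaxation of this instance is inexact. -/
open Matrix Finset

/-- The piecewise-linear RLT underestimator ℓ_R. -/
noncomputable def ellR {n : ℕ} (Q : Matrix (Fin n) (Fin n) ℝ) (c : Fin n → ℝ)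
    (x : Fin n → ℝ) : ℝ :=
  (1/2) * (∑ i, ∑ j,
      ((if 0 < Q i j then Q i j * max 0 (x i + x j - 1) else 0) +
       (if Q i j < 0 then Q i j * min (x i) (x j) else 0))) +
    ∑ i, c i * x i

/-! With `s = ∑ xᵢ`, the quadratic form is `q(x) = (s² - 3 ∑ xᵢ²) / 6`, which is `-1/3`
at `(1,1,0)`. On the unit cube, `xᵢ² ≤ xᵢ` together with `(1-x₀)(1-x₁)(1-x₂) ≥ 0` and
`x₀x₁x₂ ≥ 0` gives `3 ∑ xᵢ² - s² ≤ 2`, i.e. `q ≥ -1/3`. At the centre of the cube every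
`max 0 (xᵢ + xⱼ - 1)` vanishes and every `min xᵢ xⱼ` is `1/2`, so `ℓ_R` only sees the three
negative diagonal entries `-2/3`. -/

theorem dotProduct_smul_vecMulVec_one_sub_one_mulVec {n : Type*} [Fintype n] [DecidableEq n]
    (a : ℝ) (x : n → ℝ) :
    x ⬝ᵥ ((a • vecMulVec 1 1 - 1) *ᵥ x) = a * (∑ i, x i) ^ 2 - x ⬝ᵥ x := by
  have hones : x ⬝ᵥ (vecMulVec 1 1 *ᵥ x) = (∑ i, x i) ^ 2 := by
    simp [dotProduct, mulVec, vecMulVec_apply, sq, Finset.sum_mul]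
  rw [sub_mulVec, smul_mulVec, one_mulVec, dotProduct_sub, dotProduct_smul, smul_eq_mul, hones]

theorem three_dotProduct_self_sub_sq_sum_le_two {x : Fin 3 → ℝ} (hx : x ∈ Set.Icc 0 1) :
    3 * (x ⬝ᵥ x) - (∑ i, x i) ^ 2 ≤ 2 := by
  have h0 i : 0 ≤ x i := hx.1 i
  have h1 i : 0 ≤ 1 - x i := sub_nonneg.2 (hx.2 i)
  have hsq i : x i * x i ≤ x i := by nlinarith [h0 i, h1 i]
  have hcorner : 0 ≤ (1 - x 0) * (1 - x 1) * (1 - x 2) :=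
    mul_nonneg (mul_nonneg (h1 0) (h1 1)) (h1 2)
  have hprod : 0 ≤ x 0 * x 1 * x 2 := mul_nonneg (mul_nonneg (h0 0) (h0 1)) (h0 2)
  simp only [dotProduct, Fin.sum_univ_three]
  nlinarith [hsq 0, hsq 1, hsq 2]

theorem ellR_zero_const_half {n : ℕ} (Q : Matrix (Fin n) (Fin n) ℝ) :
    ellR Q 0 (fun _ => 1 / 2) = (1 / 4) * ∑ i, ∑ j, min (Q i j) 0 := by
  have hterm (q : ℝ) : ((if 0 < q then q * max 0 ((1:ℝ)/2 + 1/2 - 1) else 0) +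
      (if q < 0 then q * min ((1:ℝ)/2) (1/2) else 0)) = min q 0 / 2 := by
    norm_num
    rcases lt_trichotomy q 0 with hq | rfl | hq
    · simp [hq, min_eq_left hq.le, div_eq_mul_inv]
    · simp
    · simp [hq.not_gt, min_eq_right hq.le]
  simp only [ellR, hterm, Pi.zero_apply, zero_mul, Finset.sum_const_zero, add_zero,
    ← Finset.sum_div]
  ring

theorem stmt_16 (Q : Matrix (Fin 3) (Fin 3) ℝ)
    (hQ : Q = ((3 : ℝ)⁻¹) • Matrix.vecMulVec 1 1 - 1) :
    IsLeast ((fun x => (1/2) * (x ⬝ᵥ (Q *ᵥ x))) '' Set.Icc (0 : Fin 3 → ℝ) 1) (-1/3) ∧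
    ellR Q 0 (fun _ => (1 : ℝ)/2) = -1/2 ∧
    (-1/2 : ℝ) < -1/3 := by
  subst hQ
  simp only [dotProduct_smul_vecMulVec_one_sub_one_mulVec]
  refine ⟨⟨⟨![1, 1, 0], ?_, ?_⟩, ?_⟩, ?_, by norm_num⟩
  · constructor <;> intro i <;> fin_cases i <;> norm_num
  · simp [dotProduct, Fin.sum_univ_three]
    norm_num
  · rintro _ ⟨x, hx, rfl⟩
    linarith [three_dotProduct_self_sub_sq_sum_le_two hx]
  · rw [ellR_zero_const_half]
    simp [Fin.sum_univ_three, one_apply]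
    norm_num
end
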